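/- Let $X$ be a separable Hilbert space with probability measure $\nu$ satisfying Hypothesis 1, let $p > 1$, $s \in (1,p)$, and let $\varphi \in W^{1,p}(X,\nu)$ with $\varphi \geq 0$ $\nu$-a.e. Then $\varphi^s \in W^{1,p/s}(X,\nu)$ and $\|\varphi^s\|_{W^{1,p/s}(X,\nu)} \leq \|\varphi\|_{L^p(X,\nu)}^s + s\, \|M_p\varphi\|_{L^p(X,\nu;X)}\, \|\varphi\|_{L^p(X,\nu)}^{s-1}$. -/

import Mathlib

/-!
Approximate `φ` in `W^{1,p}` by `fₙ ∈ C¹_b(X)`. For `s > 1` the function `t ↦ (t⁺)^s` is `C¹`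
with derivative `s (t⁺)^{s-1}`, so `(fₙ⁺)^s ∈ C¹_b(X)` with gradient `s (fₙ⁺)^{s-1} ∇fₙ`.
Hölder's inequality for `1/(p/s) = 1/(p/(s-1)) + 1/p`, together with the continuity of
`u ↦ (u⁺)^r` from `Lᵖ` to `L^{p/r}`, shows that `(fₙ⁺)^s → φ^s` and
`R∇(fₙ⁺)^s → s φ^{s-1} M_pφ` in `L^{p/s}`; the same Hölder inequality gives the norm bound,
since `‖φ^s‖_{p/s} = ‖φ‖_p^s`.

`X` is not assumed separable, so `R∇fₙ` need not be strongly measurable. The triangle and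
Hölder inequalities still hold when one factor is non-measurable: the lower Lebesgue integral
of a non-measurable function is attained by a measurable minorant.
-/

open MeasureTheory Filter
open scoped ENNReal Topology RealInnerProductSpace

noncomputable section

variable {X : Type*} [NormedAddCommGroup X] [InnerProductSpace ℝ X] [CompleteSpace X]
  [MeasurableSpace X] [BorelSpace X]

/-- `f ∈ C¹_b(X)`: bounded, continuously Fréchet differentiable, with bounded gradient. -/
def C1b (f : X → ℝ) : Prop :=
  ContDiff ℝ 1 f ∧ (∃ C, ∀ x, |f x| ≤ C) ∧ (∃ C, ∀ x, ‖gradient f x‖ ≤ C)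

/-- `f ∈ W^{1,p}(X,ν)` with `M_p f = G`, where `M_p` is the closure of `R∇` defined on
`C¹_b(X)`. -/
def IsSobolevPair (R : X →L[ℝ] X) (ν : Measure X) (p : ℝ≥0∞)
    (f : X → ℝ) (G : X → X) : Prop :=
  MemLp f p ν ∧ MemLp G p ν ∧
    ∃ fn : ℕ → X → ℝ, (∀ n, C1b (fn n)) ∧
      Tendsto (fun n => eLpNorm (fun x => fn n x - f x) p ν) atTop (𝓝 0) ∧
      Tendsto (fun n => eLpNorm (fun x => R (gradient (fn n) x) - G x) p ν) atTop (𝓝 0)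

open Set

section NonmeasurableLp

variable {α E : Type*} [MeasurableSpace α] {μ : Measure α} [NormedAddCommGroup E]

theorem exists_measurable_le_enorm_eLpNorm_eq (f : α → E) {p : ℝ≥0∞} (hp0 : p ≠ 0)
    (hp : p ≠ ∞) :
    ∃ g : α → ℝ≥0∞, Measurable g ∧ (∀ x, g x ≤ ‖f x‖ₑ) ∧ eLpNorm f p μ = eLpNorm g p μ := by
  have hp' : 0 < p.toReal := ENNReal.toReal_pos hp0 hp
  obtain ⟨ψ, hψ, hψf, hψint⟩ := exists_measurable_le_lintegral_eq μ fun x => ‖f x‖ₑ ^ p.toReal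
  have hroot : ∀ x, (ψ x ^ p.toReal⁻¹) ^ p.toReal = ψ x := fun x => by
    rw [← ENNReal.rpow_mul, inv_mul_cancel₀ hp'.ne', ENNReal.rpow_one]
  refine ⟨fun x => ψ x ^ p.toReal⁻¹, hψ.pow_const _, fun x => ?_, ?_⟩
  · rw [← ENNReal.rpow_le_rpow_iff hp', hroot]
    exact hψf x
  · simp only [eLpNorm_eq_lintegral_rpow_enorm_toReal hp0 hp, enorm_eq_self, hroot, hψint]

theorem eLpNorm_add_le_of_aestronglyMeasurable_right {f g : α → E}
    (hg : AEStronglyMeasurable g μ) {p : ℝ≥0∞} (hp1 : 1 ≤ p) :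
    eLpNorm (f + g) p μ ≤ eLpNorm f p μ + eLpNorm g p μ := by
  by_cases hp : p = ∞
  · simp [hp, eLpNormEssSup_add_le]
  obtain ⟨ψ, hψ, hψfg, hψeq⟩ :=
    exists_measurable_le_enorm_eLpNorm_eq (μ := μ) (f + g) (by positivity) hp
  have hψ_sub : ∀ x, ψ x - ‖g x‖ₑ ≤ ‖f x‖ₑ := fun x =>
    tsub_le_iff_right.2 ((hψfg x).trans (enorm_add_le _ _))
  calc eLpNorm (f + g) p μ = eLpNorm ψ p μ := hψeq
    _ ≤ eLpNorm ((fun x => ψ x - ‖g x‖ₑ) + fun x => ‖g x‖ₑ) p μ :=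
        eLpNorm_mono_enorm fun x => by
          simp only [enorm_eq_self, Pi.add_apply]
          exact le_tsub_add
    _ ≤ eLpNorm (fun x => ψ x - ‖g x‖ₑ) p μ + eLpNorm (fun x => ‖g x‖ₑ) p μ :=
        eLpNorm_add_le (hψ.aemeasurable.sub hg.enorm).aestronglyMeasurable
          hg.enorm.aestronglyMeasurable hp1
    _ ≤ eLpNorm f p μ + eLpNorm g p μ := by
        rw [eLpNorm_enorm]
        gcongr 1
        exact eLpNorm_mono_enorm fun x => by simpa only [enorm_eq_self] using hψ_sub x

theorem eLpNorm_smul_le_mul_eLpNorm_of_aestronglyMeasurable_left [NormedSpace ℝ E]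
    {c : α → ℝ} {W : α → E} (hc : AEStronglyMeasurable c μ) {p q r : ℝ≥0∞}
    [ENNReal.HolderTriple p q r] (hr0 : r ≠ 0) (hr : r ≠ ∞) :
    eLpNorm (c • W) r μ ≤ eLpNorm c p μ * eLpNorm W q μ := by
  obtain ⟨ψ, hψ, hψcW, hψeq⟩ := exists_measurable_le_enorm_eLpNorm_eq (μ := μ) (c • W) hr0 hr
  set h : α → ℝ := fun x => (ψ x / ‖c x‖ₑ).toReal
  have hh : AEStronglyMeasurable h μ :=
    (hψ.aemeasurable.div hc.enorm).ennreal_toReal.aestronglyMeasurable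
  have key : ∀ x, ψ x ≤ ‖c x‖ₑ * ‖h x‖ₑ ∧ ‖h x‖ₑ ≤ ‖W x‖ₑ := by
    intro x
    have hψx : ψ x ≤ ‖c x‖ₑ * ‖W x‖ₑ := by simpa [enorm_smul] using hψcW x
    have hdiv : ψ x / ‖c x‖ₑ ≤ ‖W x‖ₑ := ENNReal.div_le_of_le_mul' hψx
    have hh_eq : ‖h x‖ₑ = ψ x / ‖c x‖ₑ := by
      rw [Real.enorm_of_nonneg ENNReal.toReal_nonneg, ENNReal.ofReal_toReal
        (hdiv.trans_lt enorm_lt_top).ne]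
    refine ⟨?_, hh_eq ▸ hdiv⟩
    rw [hh_eq, ENNReal.mul_div_cancel' (fun h0 => by simpa [h0] using hψx)
      (fun htop => absurd htop enorm_ne_top)]
  calc eLpNorm (c • W) r μ = eLpNorm ψ r μ := hψeq
    _ ≤ eLpNorm (c • h) r μ :=
        eLpNorm_mono_enorm fun x => by simpa [enorm_smul] using (key x).1
    _ ≤ eLpNorm c p μ * eLpNorm h q μ := eLpNorm_smul_le_mul_eLpNorm hh hc
    _ ≤ eLpNorm c p μ * eLpNorm W q μ := by
        gcongr 1
        exact eLpNorm_mono_enorm fun x => (key x).2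

end NonmeasurableLp

/-- `(t⁺) ^ r`. Unlike `t ^ r`, whose value at a negative base is `Real.rpow` junk, this is `C¹` on
all of `ℝ` when `r > 1`. -/
def posRpow (r t : ℝ) : ℝ := max t 0 ^ r

section PosRpow

variable {r t : ℝ}

theorem posRpow_nonneg (r t : ℝ) : 0 ≤ posRpow r t :=
  Real.rpow_nonneg (le_max_right _ _) _

theorem posRpow_of_nonneg (ht : 0 ≤ t) : posRpow r t = t ^ r := by
  rw [posRpow, max_eq_left ht]

theorem posRpow_of_nonpos (hr : r ≠ 0) (ht : t ≤ 0) : posRpow r t = 0 := by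
  rw [posRpow, max_eq_right ht, Real.zero_rpow hr]

theorem continuous_posRpow (hr : 0 ≤ r) : Continuous (posRpow r) :=
  (Real.continuous_rpow_const hr).comp (continuous_id.max continuous_const)

theorem posRpow_le_rpow_of_abs_le {C : ℝ} (hr : 0 ≤ r) (h : |t| ≤ C) : posRpow r t ≤ C ^ r :=
  Real.rpow_le_rpow (le_max_right _ _) ((max_le (le_abs_self t) (abs_nonneg t)).trans h) hr

theorem hasDerivAt_posRpow (hr : 1 < r) (t : ℝ) :
    HasDerivAt (posRpow r) (r * posRpow (r - 1) t) t := by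
  have hr0 : r ≠ 0 := by positivity
  have hr1 : r - 1 ≠ 0 := by linarith
  rcases lt_trichotomy t 0 with ht | rfl | ht
  · rw [posRpow_of_nonpos hr1 ht.le, mul_zero]
    exact (hasDerivAt_const t 0).congr_of_eventuallyEq <|
      mem_of_superset (Iio_mem_nhds ht) fun u hu => posRpow_of_nonpos hr0 (le_of_lt hu)
  · have hpos : HasDerivWithinAt (posRpow r) (r * posRpow (r - 1) 0) (Ici 0) 0 := by
      rw [posRpow_of_nonneg le_rfl]
      exact (Real.hasDerivAt_rpow_const (Or.inr hr.le)).hasDerivWithinAt.congr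
        (fun u hu => posRpow_of_nonneg hu) (posRpow_of_nonneg le_rfl)
    have hneg : HasDerivWithinAt (posRpow r) (r * posRpow (r - 1) 0) (Iic 0) 0 := by
      rw [posRpow_of_nonpos hr1 le_rfl, mul_zero]
      exact (hasDerivWithinAt_const 0 _ 0).congr (fun u hu => posRpow_of_nonpos hr0 hu)
        (posRpow_of_nonpos hr0 le_rfl)
    simpa only [Iic_union_Ici, hasDerivWithinAt_univ] using hneg.union hpos
  · rw [posRpow_of_nonneg ht.le]
    exact (Real.hasDerivAt_rpow_const (Or.inl ht.ne')).congr_of_eventuallyEq <|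
      mem_of_superset (Ioi_mem_nhds ht) fun u hu => posRpow_of_nonneg (le_of_lt hu)

theorem contDiff_posRpow (hr : 1 < r) : ContDiff ℝ 1 (posRpow r) := by
  rw [contDiff_one_iff_deriv]
  refine ⟨fun t => (hasDerivAt_posRpow hr t).differentiableAt, ?_⟩
  rw [show deriv (posRpow r) = fun t => r * posRpow (r - 1) t from
    funext fun t => (hasDerivAt_posRpow hr t).deriv]
  exact continuous_const.mul (continuous_posRpow (by linarith))

theorem abs_posRpow_sub_le_of_le_one (hr0 : 0 < r) (hr1 : r ≤ 1) (a b : ℝ) :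
    |posRpow r a - posRpow r b| ≤ |a - b| ^ r := by
  wlog hab : max b 0 ≤ max a 0 generalizing a b
  · rw [abs_sub_comm, abs_sub_comm a]
    exact this b a (le_of_not_ge hab)
  have hsub : (max a 0 - max b 0) ^ r ≤ |a - b| ^ r :=
    Real.rpow_le_rpow (sub_nonneg.2 hab) ((abs_max_sub_max_le_abs a b 0).trans' (le_abs_self _))
      hr0.le
  have hsubadd := Real.rpow_add_le_add_rpow (le_max_right b 0) (sub_nonneg.2 hab) hr0.le hr1
  rw [add_sub_cancel] at hsubadd
  simp only [posRpow]
  rw [abs_of_nonneg (sub_nonneg.2 (Real.rpow_le_rpow (le_max_right _ _) hab hr0.le))]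
  linarith

theorem abs_posRpow_sub_le_of_one_lt (hr : 1 < r) (a b : ℝ) :
    |posRpow r a - posRpow r b| ≤ r * (|a| + |b|) ^ (r - 1) * |a - b| := by
  set M := |a| + |b|
  have hmem : ∀ u, |u| ≤ M → u ∈ Icc (-M) M := fun u hu => abs_le.1 hu
  have bound : ∀ u ∈ Icc (-M) M, ‖r * posRpow (r - 1) u‖ ≤ r * M ^ (r - 1) := fun u hu => by
    rw [Real.norm_of_nonneg (by have := posRpow_nonneg (r - 1) u; positivity)]
    exact mul_le_mul_of_nonneg_left
      (posRpow_le_rpow_of_abs_le (by linarith) (abs_le.2 hu)) (by linarith)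
  simpa only [Real.norm_eq_abs] using
    (convex_Icc (-M) M).norm_image_sub_le_of_norm_hasDerivWithin_le
      (fun u _ => (hasDerivAt_posRpow hr u).hasDerivWithinAt) bound
      (hmem b (by simp [M])) (hmem a (by simp [M]))

end PosRpow

theorem Real.holderTriple_div_sub_one_div {p r : ℝ} (hp : 0 < p) (hr : 1 < r) :
    (p / (r - 1)).HolderTriple p (p / r) where
  inv_add_inv_eq_inv := by field_simp; ring
  left_pos := div_pos hp (by linarith)
  right_pos := hp

section PosRpowLp

variable {α : Type*} [MeasurableSpace α] {μ : Measure α} {p r : ℝ}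

theorem eLpNorm_abs_rpow (f : α → ℝ) (hp : 0 < p) (hr : 0 < r) :
    eLpNorm (fun x => |f x| ^ r) (.ofReal (p / r)) μ = eLpNorm f (.ofReal p) μ ^ r := by
  simpa only [Real.norm_eq_abs, ← ENNReal.ofReal_mul (div_pos hp hr).le,
    div_mul_cancel₀ p hr.ne'] using eLpNorm_norm_rpow (p := .ofReal (p / r)) (μ := μ) f hr

theorem eLpNorm_posRpow_comp_le (f : α → ℝ) (hp : 0 < p) (hr : 0 < r) :
    eLpNorm (fun x => posRpow r (f x)) (.ofReal (p / r)) μ ≤ eLpNorm f (.ofReal p) μ ^ r := by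
  have h := eLpNorm_abs_rpow (μ := μ) (fun x => max (f x) 0) hp hr
  simp only [abs_of_nonneg (le_max_right _ (0 : ℝ))] at h
  rw [show (fun x => posRpow r (f x)) = fun x => max (f x) 0 ^ r from rfl, h]
  gcongr
  exact eLpNorm_mono fun x => by
    rw [Real.norm_eq_abs, Real.norm_eq_abs, abs_of_nonneg (le_max_right _ (0 : ℝ))]
    exact max_le (le_abs_self _) (abs_nonneg _)

theorem MemLp.posRpow_comp {f : α → ℝ} (hf : MemLp f (.ofReal p) μ) (hp : 0 < p) (hr : 0 < r) :
    MemLp (fun x => posRpow r (f x)) (.ofReal (p / r)) μ :=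
  ⟨(continuous_posRpow hr.le).comp_aestronglyMeasurable hf.1,
    (eLpNorm_posRpow_comp_le f hp hr).trans_lt
      (ENNReal.rpow_lt_top_of_nonneg hr.le hf.eLpNorm_ne_top)⟩

theorem eLpNorm_mul_posRpow_smul_le {E : Type*} [NormedAddCommGroup E] [NormedSpace ℝ E]
    {s : ℝ} {f : α → ℝ} {G : α → E} (hf : AEStronglyMeasurable f μ)
    (hG : AEStronglyMeasurable G μ) (hp : 0 < p) (hs : 1 < s) :
    eLpNorm (fun x => (s * posRpow (s - 1) (f x)) • G x) (.ofReal (p / s)) μ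
      ≤ ‖s‖ₑ * eLpNorm f (.ofReal p) μ ^ (s - 1) * eLpNorm G (.ofReal p) μ := by
  have := (Real.holderTriple_div_sub_one_div hp hs).ennrealOfReal
  calc _ ≤ eLpNorm (fun x => s * posRpow (s - 1) (f x)) (.ofReal (p / (s - 1))) μ
        * eLpNorm G (.ofReal p) μ :=
        eLpNorm_smul_le_mul_eLpNorm hG
          (((continuous_posRpow (by linarith)).comp_aestronglyMeasurable hf).const_mul s)
    _ ≤ _ := by
        rw [show (fun x => s * posRpow (s - 1) (f x)) = s • fun x => posRpow (s - 1) (f x) from rfl,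
          eLpNorm_const_smul]
        gcongr
        exact eLpNorm_posRpow_comp_le f hp (by linarith)

end PosRpowLp

section PosRpowContinuity

variable {α : Type*} [MeasurableSpace α] {μ : Measure α} {p r : ℝ} {f : ℕ → α → ℝ} {g : α → ℝ}

theorem tendsto_eLpNorm_posRpow_comp_sub_of_le_one (hp : 0 < p) (hr0 : 0 < r) (hr1 : r ≤ 1)
    (h : Tendsto (fun n => eLpNorm (fun x => f n x - g x) (.ofReal p) μ) atTop (𝓝 0)) :
    Tendsto (fun n => eLpNorm (fun x => posRpow r (f n x) - posRpow r (g x)) (.ofReal (p / r)) μ)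
      atTop (𝓝 0) := by
  have hlim : Tendsto (fun n => eLpNorm (fun x => f n x - g x) (.ofReal p) μ ^ r) atTop (𝓝 0) := by
    simpa [Function.comp_def, ENNReal.zero_rpow_of_pos hr0] using
      ((ENNReal.continuous_rpow_const (y := r)).tendsto 0).comp h
  refine tendsto_of_tendsto_of_tendsto_of_le_of_le tendsto_const_nhds hlim (fun _ => zero_le)
    fun n => ?_
  rw [← eLpNorm_abs_rpow _ hp hr0]
  exact eLpNorm_mono_real fun x => by
    simpa only [Real.norm_eq_abs] using abs_posRpow_sub_le_of_le_one hr0 hr1 _ _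

theorem eLpNorm_posRpow_comp_sub_le_of_one_lt (hp : 1 ≤ p) (hr : 1 < r) {f g : α → ℝ}
    (hf : AEStronglyMeasurable f μ) (hg : AEStronglyMeasurable g μ) :
    eLpNorm (fun x => posRpow r (f x) - posRpow r (g x)) (.ofReal (p / r)) μ
      ≤ ‖r‖ₑ * (eLpNorm (fun x => f x - g x) (.ofReal p) μ + 2 * eLpNorm g (.ofReal p) μ) ^ (r - 1)
        * eLpNorm (fun x => f x - g x) (.ofReal p) μ := by
  have hp0 : 0 < p := by linarith
  have hr1 : 0 < r - 1 := by linarith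
  have := (Real.holderTriple_div_sub_one_div hp0 hr).ennrealOfReal
  have hsum : eLpNorm (fun x => |f x| + |g x|) (.ofReal p) μ
      ≤ eLpNorm (fun x => f x - g x) (.ofReal p) μ + 2 * eLpNorm g (.ofReal p) μ :=
    calc _ ≤ eLpNorm ((fun x => ‖f x - g x‖) + (2 : ℝ) • fun x => ‖g x‖) (.ofReal p) μ :=
          eLpNorm_mono_real fun x => by
            simp only [Pi.add_apply, Pi.smul_apply, smul_eq_mul, Real.norm_eq_abs]
            rw [abs_of_nonneg (by positivity)]
            linarith [abs_sub_abs_le_abs_sub (f x) (g x)]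
      _ ≤ _ := by
          refine (eLpNorm_add_le (hf.sub hg).norm (hg.norm.const_smul _)
            (by simpa using ENNReal.ofReal_le_ofReal hp)).trans ?_
          rw [eLpNorm_const_smul, eLpNorm_norm, eLpNorm_norm,
            show ‖(2 : ℝ)‖ₑ = 2 by simp [Real.enorm_eq_ofReal_abs]]
          exact le_rfl
  have hweight : eLpNorm (fun x => r * (|f x| + |g x|) ^ (r - 1)) (.ofReal (p / (r - 1))) μ
      = ‖r‖ₑ * eLpNorm (fun x => |f x| + |g x|) (.ofReal p) μ ^ (r - 1) := by
    rw [← eLpNorm_abs_rpow _ hp0 hr1, ← eLpNorm_const_smul]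
    congr with x
    simp only [Pi.smul_apply, smul_eq_mul, abs_of_nonneg (by positivity : 0 ≤ |f x| + |g x|)]
  calc _ ≤ eLpNorm ((fun x => r * (|f x| + |g x|) ^ (r - 1)) • fun x => f x - g x)
        (.ofReal (p / r)) μ :=
        eLpNorm_mono fun x => by
          simpa [abs_mul, abs_of_pos (zero_lt_one.trans hr),
            abs_of_nonneg (by positivity : 0 ≤ (|f x| + |g x|) ^ (r - 1))] using
            abs_posRpow_sub_le_of_one_lt hr (f x) (g x)
    _ ≤ eLpNorm (fun x => r * (|f x| + |g x|) ^ (r - 1)) (.ofReal (p / (r - 1))) μ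
        * eLpNorm (fun x => f x - g x) (.ofReal p) μ :=
        eLpNorm_smul_le_mul_eLpNorm (hf.sub hg)
          (((Real.continuous_rpow_const hr1.le).comp_aestronglyMeasurable
            (hf.norm.add hg.norm)).const_mul r)
    _ ≤ _ := by
        rw [hweight]
        gcongr

theorem tendsto_eLpNorm_posRpow_comp_sub_of_one_lt (hp : 1 ≤ p) (hr : 1 < r)
    (hf : ∀ n, AEStronglyMeasurable (f n) μ) (hg : MemLp g (.ofReal p) μ)
    (h : Tendsto (fun n => eLpNorm (fun x => f n x - g x) (.ofReal p) μ) atTop (𝓝 0)) :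
    Tendsto (fun n => eLpNorm (fun x => posRpow r (f n x) - posRpow r (g x)) (.ofReal (p / r)) μ)
      atTop (𝓝 0) := by
  set N := eLpNorm g (.ofReal p) μ
  have hlim : Tendsto (fun n => ‖r‖ₑ * (eLpNorm (fun x => f n x - g x) (.ofReal p) μ + 2 * N)
      ^ (r - 1) * eLpNorm (fun x => f n x - g x) (.ofReal p) μ) atTop
      (𝓝 (‖r‖ₑ * (0 + 2 * N) ^ (r - 1) * 0)) := by
    refine ENNReal.Tendsto.mul (ENNReal.Tendsto.const_mul ?_ (Or.inr enorm_ne_top))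
      (Or.inr ENNReal.zero_ne_top) h (Or.inr ?_)
    · exact ((ENNReal.continuous_rpow_const).tendsto _).comp (h.add tendsto_const_nhds)
    · have : N ≠ ∞ := hg.eLpNorm_ne_top
      finiteness
  rw [mul_zero] at hlim
  exact tendsto_of_tendsto_of_tendsto_of_le_of_le tendsto_const_nhds hlim (fun _ => zero_le)
    fun n => eLpNorm_posRpow_comp_sub_le_of_one_lt hp hr (hf n) hg.1

theorem tendsto_eLpNorm_posRpow_comp_sub (hp : 1 ≤ p) (hr : 0 < r)
    (hf : ∀ n, AEStronglyMeasurable (f n) μ) (hg : MemLp g (.ofReal p) μ)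
    (h : Tendsto (fun n => eLpNorm (fun x => f n x - g x) (.ofReal p) μ) atTop (𝓝 0)) :
    Tendsto (fun n => eLpNorm (fun x => posRpow r (f n x) - posRpow r (g x)) (.ofReal (p / r)) μ)
      atTop (𝓝 0) := by
  rcases le_or_gt r 1 with hr1 | hr1
  · exact tendsto_eLpNorm_posRpow_comp_sub_of_le_one (by linarith) hr hr1 h
  · exact tendsto_eLpNorm_posRpow_comp_sub_of_one_lt hp hr1 hf hg h

end PosRpowContinuity

section ProductContinuity

variable {α E : Type*} [MeasurableSpace α] {μ : Measure α} [NormedAddCommGroup E]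
  [NormedSpace ℝ E]

theorem tendsto_eLpNorm_smul_sub_smul {c : ℕ → α → ℝ} {c₀ : α → ℝ} {W : ℕ → α → E} {G : α → E}
    {p q r : ℝ≥0∞} [ENNReal.HolderTriple p q r] (hp : 1 ≤ p) (hr : 1 ≤ r) (hr_top : r ≠ ∞)
    (hc : ∀ n, AEStronglyMeasurable (c n) μ) (hc₀ : MemLp c₀ p μ) (hG : MemLp G q μ)
    (hcc : Tendsto (fun n => eLpNorm (fun x => c n x - c₀ x) p μ) atTop (𝓝 0))
    (hWG : Tendsto (fun n => eLpNorm (fun x => W n x - G x) q μ) atTop (𝓝 0)) :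
    Tendsto (fun n => eLpNorm (fun x => c n x • W n x - c₀ x • G x) r μ) atTop (𝓝 0) := by
  set ε := fun n => eLpNorm (fun x => c n x - c₀ x) p μ
  set δ := fun n => eLpNorm (fun x => W n x - G x) q μ
  have hsplit : ∀ n, (fun x => c n x • W n x - c₀ x • G x)
      = (c n • fun x => W n x - G x) + (fun x => c n x - c₀ x) • G := fun n => by
    ext x
    simp only [Pi.add_apply, Pi.smul_apply', smul_sub, sub_smul]
    abel
  have hc_le : ∀ n, eLpNorm (c n) p μ ≤ ε n + eLpNorm c₀ p μ := fun n => by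
    have h := eLpNorm_add_le ((hc n).sub hc₀.1) hc₀.1 hp (f := fun x => c n x - c₀ x)
    rwa [show ((fun x => c n x - c₀ x) + c₀) = c n by ext x; simp] at h
  have hbound : ∀ n, eLpNorm (fun x => c n x • W n x - c₀ x • G x) r μ
      ≤ (ε n + eLpNorm c₀ p μ) * δ n + ε n * eLpNorm G q μ := fun n => by
    rw [hsplit]
    refine (eLpNorm_add_le_of_aestronglyMeasurable_right (((hc n).sub hc₀.1).smul hG.1) hr).trans ?_
    gcongr
    · exact (eLpNorm_smul_le_mul_eLpNorm_of_aestronglyMeasurable_left (hc n)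
        (by positivity) hr_top).trans (by gcongr; exact hc_le n)
    · exact eLpNorm_smul_le_mul_eLpNorm hG.1 ((hc n).sub hc₀.1)
  have hlim : Tendsto (fun n => (ε n + eLpNorm c₀ p μ) * δ n + ε n * eLpNorm G q μ) atTop
      (𝓝 ((0 + eLpNorm c₀ p μ) * 0 + 0 * eLpNorm G q μ)) :=
    (ENNReal.Tendsto.mul (hcc.add tendsto_const_nhds) (Or.inr ENNReal.zero_ne_top) hWG
      (Or.inr (by simpa using hc₀.eLpNorm_ne_top))).add
      (ENNReal.Tendsto.mul_const hcc (Or.inr hG.eLpNorm_ne_top))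
  simp only [mul_zero, zero_mul, add_zero] at hlim
  exact tendsto_of_tendsto_of_tendsto_of_le_of_le tendsto_const_nhds hlim (fun _ => zero_le) hbound

end ProductContinuity

section ChainRule

variable {F : Type*} [NormedAddCommGroup F] [InnerProductSpace ℝ F] [CompleteSpace F]

theorem HasDerivAt.gradient_comp {θ : ℝ → ℝ} {θ' : ℝ} {f : F → ℝ} {x : F}
    (hθ : HasDerivAt θ θ' (f x)) (hf : DifferentiableAt ℝ f x) :
    gradient (fun y => θ (f y)) x = θ' • gradient f x := by
  change (InnerProductSpace.toDual ℝ F).symm (fderiv ℝ (θ ∘ f) x) = _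
  rw [(hθ.comp_hasFDerivAt x hf.hasFDerivAt).fderiv, map_smul]
  rfl

theorem gradient_posRpow_comp {s : ℝ} (hs : 1 < s) {f : F → ℝ} {x : F}
    (hf : DifferentiableAt ℝ f x) :
    gradient (fun y => posRpow s (f y)) x = (s * posRpow (s - 1) (f x)) • gradient f x :=
  (hasDerivAt_posRpow hs (f x)).gradient_comp hf

theorem C1b.posRpow_comp {s : ℝ} (hs : 1 < s) {f : F → ℝ} (hf : C1b f) :
    C1b fun x => posRpow s (f x) := by
  obtain ⟨hf_diff, ⟨C, hC⟩, ⟨D, hD⟩⟩ := hf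
  have hs0 : 0 ≤ s - 1 := by linarith
  refine ⟨(contDiff_posRpow hs).comp hf_diff, ⟨C ^ s, fun x => ?_⟩,
    ⟨s * C ^ (s - 1) * D, fun x => ?_⟩⟩
  · rw [abs_of_nonneg (posRpow_nonneg _ _)]
    exact posRpow_le_rpow_of_abs_le (by linarith) (hC x)
  · rw [gradient_posRpow_comp hs ((hf_diff.differentiable one_ne_zero) x), norm_smul,
      Real.norm_of_nonneg (mul_nonneg (by linarith) (posRpow_nonneg _ _))]
    have hC0 : 0 ≤ C := (abs_nonneg _).trans (hC x)
    gcongr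
    · exact posRpow_le_rpow_of_abs_le hs0 (hC x)
    · exact hD x

end ChainRule

section Sobolev

variable {H : Type*} [NormedAddCommGroup H] [InnerProductSpace ℝ H] [CompleteSpace H]
  [MeasurableSpace H] {R : H →L[ℝ] H} {ν : Measure H}

theorem IsSobolevPair.congr_ae {p : ℝ≥0∞} {f g : H → ℝ} {G : H → H}
    (h : IsSobolevPair R ν p f G) (hfg : f =ᵐ[ν] g) : IsSobolevPair R ν p g G := by
  obtain ⟨hf, hG, fn, hfn, hconv, hgrad⟩ := h
  refine ⟨hf.ae_eq hfg, hG, fn, hfn, hconv.congr fun n => eLpNorm_congr_ae ?_, hgrad⟩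
  filter_upwards [hfg] with x hx
  rw [hx]

theorem IsSobolevPair.posRpow_comp [BorelSpace H] {p s : ℝ} {φ : H → ℝ} {G : H → H}
    (hφ : IsSobolevPair R ν (.ofReal p) φ G) (hs : 1 < s) (hsp : s < p) :
    IsSobolevPair R ν (.ofReal (p / s)) (fun x => posRpow s (φ x))
      (fun x => (s * posRpow (s - 1) (φ x)) • G x) := by
  obtain ⟨hφp, hGp, f, hf, hfφ, hfG⟩ := hφ
  have hp0 : 0 < p := by linarith
  have hfm : ∀ n, AEStronglyMeasurable (f n) ν := fun n =>
    (hf n).1.continuous.aestronglyMeasurable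
  have hcoef : MemLp (fun x => s * posRpow (s - 1) (φ x)) (.ofReal (p / (s - 1))) ν :=
    (MemLp.posRpow_comp hφp hp0 (by linarith)).const_mul s
  have := (Real.holderTriple_div_sub_one_div hp0 hs).ennrealOfReal
  refine ⟨MemLp.posRpow_comp hφp hp0 (by linarith), hGp.smul hcoef, fun n x => posRpow s (f n x),
    fun n => (hf n).posRpow_comp hs,
    tendsto_eLpNorm_posRpow_comp_sub (by linarith) (by linarith) hfm hφp hfφ, ?_⟩
  have hgrad : ∀ n x, R (gradient (fun y => posRpow s (f n y)) x)
      = (s * posRpow (s - 1) (f n x)) • R (gradient (f n) x) := fun n x => by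
    rw [gradient_posRpow_comp hs (((hf n).1.differentiable one_ne_zero) x), map_smul]
  simp only [hgrad]
  refine tendsto_eLpNorm_smul_sub_smul ?_ ?_ ENNReal.ofReal_ne_top
    (fun n => ((continuous_posRpow (by linarith)).comp_aestronglyMeasurable (hfm n)).const_mul s)
    hcoef hGp ?_ hfG
  · simpa using ENNReal.ofReal_le_ofReal ((one_le_div (by linarith)).2 (by linarith))
  · simpa using ENNReal.ofReal_le_ofReal ((one_le_div (by linarith)).2 hsp.le)
  · have hdiff : ∀ n, (fun x => s * posRpow (s - 1) (f n x) - s * posRpow (s - 1) (φ x))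
        = s • fun x => posRpow (s - 1) (f n x) - posRpow (s - 1) (φ x) := fun n => by
      ext x
      simp [mul_sub]
    simp only [hdiff, eLpNorm_const_smul]
    simpa using ENNReal.Tendsto.const_mul (tendsto_eLpNorm_posRpow_comp_sub (by linarith)
      (by linarith) hfm hφp hfφ) (Or.inr enorm_ne_top)

end Sobolev

theorem stmt19_general (R : X →L[ℝ] X) (ν : Measure X)
    (p s : ℝ) (hs : 1 < s) (hsp : s < p)
    (φ : X → ℝ) (G : X → X) (hφ : IsSobolevPair R ν (ENNReal.ofReal p) φ G)
    (hpos : ∀ᵐ x ∂ν, 0 ≤ φ x) :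
    ∃ G' : X → X,
      IsSobolevPair R ν (ENNReal.ofReal (p / s)) (fun x => φ x ^ s) G' ∧
      (eLpNorm (fun x => φ x ^ s) (ENNReal.ofReal (p / s)) ν).toReal +
          (eLpNorm G' (ENNReal.ofReal (p / s)) ν).toReal ≤
        (eLpNorm φ (ENNReal.ofReal p) ν).toReal ^ s +
          s * (eLpNorm G (ENNReal.ofReal p) ν).toReal *
            (eLpNorm φ (ENNReal.ofReal p) ν).toReal ^ (s - 1) := by
  have hp : 0 < p := by linarith
  have hφs : (fun x => posRpow s (φ x)) =ᵐ[ν] fun x => φ x ^ s :=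
    hpos.mono fun x hx => posRpow_of_nonneg hx
  refine ⟨_, (hφ.posRpow_comp hs hsp).congr_ae hφs, ?_⟩
  have hnorm : eLpNorm (fun x => φ x ^ s) (.ofReal (p / s)) ν = eLpNorm φ (.ofReal p) ν ^ s := by
    rw [← eLpNorm_abs_rpow φ hp (by linarith)]
    exact eLpNorm_congr_ae (hpos.mono fun x hx => by simp only [abs_of_nonneg hx])
  have hφ_fin := hφ.1.eLpNorm_ne_top
  have hG_fin := hφ.2.1.eLpNorm_ne_top
  have hG'_le := ENNReal.toReal_mono (by finiteness)
    (eLpNorm_mul_posRpow_smul_le hφ.1.1 hφ.2.1.1 hp hs (μ := ν))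
  rw [ENNReal.toReal_mul, ENNReal.toReal_mul, ← ENNReal.toReal_rpow, toReal_enorm,
    Real.norm_of_nonneg (by linarith)] at hG'_le
  rw [hnorm, ← ENNReal.toReal_rpow]
  linarith

/-- If `φ ∈ W^{1,p}(X,ν)`, `φ ≥ 0` ν-a.e. and `1 < s < p`, then `φ^s ∈ W^{1,p/s}(X,ν)` with
`‖φ^s‖_{W^{1,p/s}} ≤ ‖φ‖_{L^p}^s + s ‖M_pφ‖_{L^p} ‖φ‖_{L^p}^{s-1}`. -/
theorem stmt19 (R : X →L[ℝ] X) (ν : Measure X) [IsProbabilityMeasure ν]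
    (p s : ℝ) (hp : 1 < p) (hs : 1 < s) (hsp : s < p)
    (hclos : ∀ G : X → X,
      IsSobolevPair R ν (ENNReal.ofReal p) (fun _ => 0) G → G =ᵐ[ν] fun _ => 0)
    (φ : X → ℝ) (G : X → X) (hφ : IsSobolevPair R ν (ENNReal.ofReal p) φ G)
    (hpos : ∀ᵐ x ∂ν, 0 ≤ φ x) :
    ∃ G' : X → X,
      IsSobolevPair R ν (ENNReal.ofReal (p / s)) (fun x => φ x ^ s) G' ∧
      (eLpNorm (fun x => φ x ^ s) (ENNReal.ofReal (p / s)) ν).toReal +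
          (eLpNorm G' (ENNReal.ofReal (p / s)) ν).toReal ≤
        (eLpNorm φ (ENNReal.ofReal p) ν).toReal ^ s +
          s * (eLpNorm G (ENNReal.ofReal p) ν).toReal *
            (eLpNorm φ (ENNReal.ofReal p) ν).toReal ^ (s - 1) :=
  stmt19_general R ν p s hs hsp φ G hφ hpos
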